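/- arXiv:2504.04799 — 5 statements merged into one kernel-verified Lean document; each statement's English description precedes it below -/
import Mathlib

section
/- Let L be a symmetric positive definite n×n real matrix, c > 0, and g ∈ ℝ. Then for all s ≤ t, ∫_s^t g² • (exp(−c(t−τ) • L) * exp(−c(t−τ) • L)ᵀ) dτ = (g²/(2c)) • ((I − exp(−2c(t−s) • L)) * L⁻¹). (This is the conditional covariance K_{t|s} of the topological stochastic heat diffusion with Brownian-motion noise, dY = −cLY dt + g dW, whose transition matrix is Ψ(t,s) = exp(−c(t−s)L).) -/
/-!
For symmetric `L` the transpose of `exp (a • L)` is `exp (a • L)` itself, so the integrand is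
`g² • exp (-(2c(t - τ)) • L)`. For invertible `L` this has the antiderivative
`τ ↦ g² • (2c)⁻¹ • exp (-(2c(t - τ)) • L) * L⁻¹`, and the fundamental theorem of calculus gives the
closed form.
-/

open MeasureTheory Matrix NormedSpace

namespace Matrix

variable {m : Type*} [Fintype m] [DecidableEq m]

theorem exp_smul_mul_transpose_exp_smul {𝔸 : Type*} [NormedCommRing 𝔸] [NormedAlgebra ℚ 𝔸]
    [CompleteSpace 𝔸] {A : Matrix m m 𝔸} (hA : A.IsSymm) (a : 𝔸) :
    exp (a • A) * (exp (a • A))ᵀ = exp ((2 * a) • A) := by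
  rw [← exp_transpose, transpose_smul, hA.eq, ← exp_add_of_commute _ _ (Commute.refl _),
    ← add_smul, two_mul]

section Deriv

/- Differentiating `exp` needs a normed ring structure on matrices; the operator norm provides one
and induces the same topology as the entrywise sup norm used for the integrals below. -/
attribute [local instance] Matrix.linftyOpNormedRing Matrix.linftyOpNormedAlgebra

theorem hasDerivAt_exp_smul_comp {u : ℝ → ℝ} {u' x : ℝ} (A : Matrix m m ℝ)
    (hu : HasDerivAt u u' x) :
    HasDerivAt (fun τ => exp (u τ • A)) (u' • (exp (u x • A) * A)) x :=
  (hasDerivAt_exp_smul_const A (u x)).scomp x hu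

theorem hasDerivAt_inv_smul_exp_smul_mul_inv {u : ℝ → ℝ} {k x : ℝ} {A : Matrix m m ℝ}
    (hA : IsUnit A.det) (hk : k ≠ 0) (hu : HasDerivAt u k x) :
    HasDerivAt (fun τ => k⁻¹ • (exp (u τ • A) * A⁻¹)) (exp (u x • A)) x := by
  have h := ((hasDerivAt_exp_smul_comp A hu).mul_const A⁻¹).const_smul k⁻¹
  rwa [smul_mul_assoc, mul_assoc, mul_nonsing_inv _ hA, mul_one, inv_smul_smul₀ hk] at h

end Deriv

end Matrix

attribute [local instance] Matrix.normedAddCommGroup Matrix.normedSpace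

theorem Matrix.integral_exp_neg_mul_sub_smul {m : Type*} [Fintype m] [DecidableEq m]
    {A : Matrix m m ℝ} (hA : IsUnit A.det) {k : ℝ} (hk : k ≠ 0) (s t : ℝ) :
    ∫ τ in s..t, exp ((-(k * (t - τ))) • A) = k⁻¹ • ((1 - exp ((-(k * (t - s))) • A)) * A⁻¹) := by
  have hu (x : ℝ) : HasDerivAt (fun τ => -(k * (t - τ))) k x := by
    simpa using (((hasDerivAt_id x).const_sub t).const_mul k).fun_neg
  have hcont : Continuous fun τ : ℝ => exp ((-(k * (t - τ))) • A) :=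
    continuous_iff_continuousAt.2 fun x => (hasDerivAt_exp_smul_comp A (hu x)).continuousAt
  rw [intervalIntegral.integral_eq_sub_of_hasDerivAt
    (fun x _ => hasDerivAt_inv_smul_exp_smul_mul_inv hA hk (hu x)) (hcont.intervalIntegrable s t)]
  simp [sub_mul, smul_sub]

/-- Conditional covariance `K_{t|s}` of the topological stochastic heat diffusion with
Brownian-motion noise `dY = -cLY dt + g dW` (with `L` symmetric positive definite, `c > 0`):
for `s ≤ t`, `∫ s..t g² • (exp(-c(t-τ) • L) exp(-c(t-τ) • L)ᵀ) dτ
  = (g²/(2c)) • ((I - exp(-2c(t-s) • L)) L⁻¹)`. -/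
theorem tsheat_bm_conditional_covariance {n : ℕ}
    (L : Matrix (Fin n) (Fin n) ℝ) (hL : L.IsSymm) (hLpd : L.PosDef)
    (c : ℝ) (hc : 0 < c) (g : ℝ) :
    ∀ s t : ℝ, s ≤ t →
      (∫ τ in s..t, g ^ 2 •
          (exp ((-(c * (t - τ))) • L) * (exp ((-(c * (t - τ))) • L))ᵀ)) =
        (g ^ 2 / (2 * c)) • ((1 - exp ((-(2 * c * (t - s))) • L)) * L⁻¹) := by
  intro s t _
  have hcov (τ : ℝ) : exp ((-(c * (t - τ))) • L) * (exp ((-(c * (t - τ))) • L))ᵀ =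
      exp ((-(2 * c * (t - τ))) • L) := by
    rw [exp_smul_mul_transpose_exp_smul hL, mul_neg, ← mul_assoc]
  simp only [hcov, intervalIntegral.integral_smul,
    integral_exp_neg_mul_sub_smul hLpd.det_pos.ne'.isUnit (by positivity : 2 * c ≠ 0), smul_smul,
    div_eq_mul_inv]
end

section
/- Let L be a symmetric positive definite n×n real matrix, c > 0, and g ∈ ℝ. Then for all t₁, t₂ ≥ 0, ∫_0^{min(t₁,t₂)} g² • (exp(−c(t₁−τ) • L) * exp(−c(t₂−τ) • L)ᵀ) dτ = (g²/(2c)) • ((exp(−c|t₁−t₂| • L) − exp(−c(t₁+t₂) • L)) * L⁻¹). (This is the cross covariance K_{t₁t₂}, conditioned on Y₀, of the topological stochastic heat diffusion dY = −cLY dt + g dW.) -/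
/-!
Since `L` is symmetric, `exp (-c(t₁-τ) • L) * exp (-c(t₂-τ) • L)ᵀ = exp ((2cτ - c(t₁+t₂)) • L)`.
The affine substitution `x = 2cτ - c(t₁+t₂)` turns the integral into `(2c)⁻¹ ∫ exp (x • L) dx`
over `[-c(t₁+t₂), -c|t₁-t₂|]`, and `x ↦ exp (x • L) * L⁻¹` is an antiderivative of `exp (x • L)`.
-/

open MeasureTheory Matrix NormedSpace

attribute [local instance] Matrix.normedAddCommGroup Matrix.normedSpace

namespace Matrix

variable {m : Type*} [Fintype m] [DecidableEq m]

section Calculus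

/- The elementwise norm does not make matrices a normed ring, so the calculus of
`exp` is done with the operator norm; it induces the same topology, which is all that
`HasDerivAt` and `Continuous` depend on. -/
open scoped Norms.Operator

theorem hasDerivAt_exp_smul_const_mul (A B : Matrix m m ℝ) (t : ℝ) :
    HasDerivAt (fun τ : ℝ => exp (τ • A) * B) (exp (t • A) * A * B) t :=
  (hasDerivAt_exp_smul_const A t).mul_const B

theorem continuous_exp_smul (A : Matrix m m ℝ) : Continuous fun τ : ℝ => exp (τ • A) :=
  continuous_iff_continuousAt.2 fun t => (hasDerivAt_exp_smul_const A t).continuousAt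

end Calculus

theorem integral_exp_smul (A : Matrix m m ℝ) (hA : IsUnit A.det) (a b : ℝ) :
    ∫ τ in a..b, exp (τ • A) = (exp (b • A) - exp (a • A)) * A⁻¹ := by
  have hderiv (τ : ℝ) : HasDerivAt (fun τ : ℝ => exp (τ • A) * A⁻¹) (exp (τ • A)) τ := by
    simpa [mul_assoc, mul_nonsing_inv A hA] using hasDerivAt_exp_smul_const_mul A A⁻¹ τ
  rw [intervalIntegral.integral_eq_sub_of_hasDerivAt (fun τ _ => hderiv τ)
    ((continuous_exp_smul A).intervalIntegrable a b), sub_mul]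

theorem IsSymm.exp_smul_mul_transpose_exp_smul {𝕂 : Type*} [RCLike 𝕂] {A : Matrix m m 𝕂}
    (hA : A.IsSymm) (s t : 𝕂) :
    NormedSpace.exp (s • A) * (NormedSpace.exp (t • A))ᵀ = NormedSpace.exp ((s + t) • A) := by
  rw [(hA.smul t).exp.eq, add_smul, exp_add_of_commute]
  exact ((Commute.refl A).smul_left s).smul_right t

end Matrix

theorem tsheat_bm_cross_covariance_general {n : ℕ}
    (L : Matrix (Fin n) (Fin n) ℝ) (hLpd : L.PosDef)
    (c : ℝ) (hc : 0 < c) (g : ℝ) :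
    ∀ t₁ t₂ : ℝ, 0 ≤ t₁ → 0 ≤ t₂ →
      (∫ τ in (0:ℝ)..min t₁ t₂, g ^ 2 •
          (exp ((-(c * (t₁ - τ))) • L) * (exp ((-(c * (t₂ - τ))) • L))ᵀ)) =
        (g ^ 2 / (2 * c)) •
          ((exp ((-(c * |t₁ - t₂|)) • L) - exp ((-(c * (t₁ + t₂))) • L)) * L⁻¹) := by
  intro t₁ t₂ _ _
  have hsymm : IsSymm L := isHermitian_iff_isSymm.1 hLpd.isHermitian
  have hexponent (τ : ℝ) :
      -(c * (t₁ - τ)) + -(c * (t₂ - τ)) = 2 * c * τ + -(c * (t₁ + t₂)) := by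
    ring
  have hupper : 2 * c * min t₁ t₂ + -(c * (t₁ + t₂)) = -(c * |t₁ - t₂|) := by
    rcases le_total t₁ t₂ with h | h
    · rw [min_eq_left h, abs_of_nonpos (sub_nonpos.2 h)]; ring
    · rw [min_eq_right h, abs_of_nonneg (sub_nonneg.2 h)]; ring
  simp_rw [hsymm.exp_smul_mul_transpose_exp_smul, hexponent]
  rw [intervalIntegral.integral_smul,
    intervalIntegral.integral_comp_mul_add (fun x => exp (x • L)) (by positivity),
    mul_zero, zero_add, hupper, integral_exp_smul L (isUnit_iff_ne_zero.2 hLpd.det_pos.ne'),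
    smul_smul, div_eq_mul_inv]

/-- Cross covariance `K_{t₁t₂}` (conditioned on `Y₀`) of the topological stochastic heat
diffusion `dY = -cLY dt + g dW` with `L` symmetric positive definite and `c > 0`: for
`t₁, t₂ ≥ 0`, `∫_0^{min(t₁,t₂)} g² • (exp(-c(t₁-τ) • L) exp(-c(t₂-τ) • L)ᵀ) dτ
  = (g²/(2c)) • ((exp(-c|t₁-t₂| • L) - exp(-c(t₁+t₂) • L)) L⁻¹)`. -/
theorem tsheat_bm_cross_covariance {n : ℕ}
    (L : Matrix (Fin n) (Fin n) ℝ) (hL : L.IsSymm) (hLpd : L.PosDef)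
    (c : ℝ) (hc : 0 < c) (g : ℝ) :
    ∀ t₁ t₂ : ℝ, 0 ≤ t₁ → 0 ≤ t₂ →
      (∫ τ in (0:ℝ)..min t₁ t₂, g ^ 2 •
          (exp ((-(c * (t₁ - τ))) • L) * (exp ((-(c * (t₂ - τ))) • L))ᵀ)) =
        (g ^ 2 / (2 * c)) •
          ((exp ((-(c * |t₁ - t₂|)) • L) - exp ((-(c * (t₁ + t₂))) • L)) * L⁻¹) :=
  tsheat_bm_cross_covariance_general L hLpd c hc g
end

section
/- Let L be a symmetric positive semidefinite n×n real matrix, c > 0, and 0 < σ_min < σ_max. Set g(τ) := σ_min (σ_max/σ_min)^τ √(2 ln(σ_max/σ_min)) and A := ln(σ_max/σ_min) • I + c • L. Then A is positive definite (hence invertible), and for all s ≤ t, ∫_s^t g(τ)² • (exp(−c(t−τ) • L) * exp(−c(t−τ) • L)ᵀ) dτ = σ_min² ln(σ_max/σ_min) • (exp(−2ct • L) * (exp(2t • A) − exp(2s • A)) * A⁻¹). (This is the conditional covariance K_{t|s} of the variance-exploding topological heat diffusion TSHeat_VE.) -/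
/-!
With `ℓ = ln(σ_max/σ_min)` and `A = ℓ • 1 + c • L`: symmetry of `L` gives
`exp(-c(t-τ)L) exp(-c(t-τ)L)ᵀ = exp(-2ctL) exp(2cτL)`, and `g(τ)² = 2σ_min²ℓ e^{2ℓτ}`; since `1`
commutes with `L`, the integrand is `2σ_min²ℓ exp(-2ctL) exp(τ • 2A)`. This has the antiderivative
`σ_min²ℓ exp(-2ctL) exp(τ • 2A) A⁻¹`, and `A` is invertible, being positive definite as a positive
multiple of `1` plus a positive semidefinite matrix.
-/

open MeasureTheory Matrix NormedSpace

attribute [local instance] Matrix.normedAddCommGroup Matrix.normedSpace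

namespace Matrix

variable {m : Type*} [Fintype m] [DecidableEq m]

-- Entries do not depend on the norm, so differentiate in the operator norm, a Banach-algebra norm.
open scoped Norms.Operator in
theorem hasDerivAt_mul_exp_smul_mul_apply (B A C : Matrix m m ℝ) (τ : ℝ) (i j : m) :
    HasDerivAt (fun u : ℝ => (B * exp (u • A) * C) i j) ((B * (exp (τ • A) * A) * C) i j) τ :=
  (entryLinearMap ℝ ℝ i j).toContinuousLinearMap.hasFDerivAt.comp_hasDerivAt τ
    (((hasDerivAt_exp_smul_const A τ).const_mul B).mul_const C)

theorem hasDerivAt_mul_exp_smul_mul (B A C : Matrix m m ℝ) (τ : ℝ) :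
    HasDerivAt (fun u : ℝ => B * exp (u • A) * C) (B * (exp (τ • A) * A) * C) τ :=
  hasDerivAt_pi.2 fun i => hasDerivAt_pi.2 fun j => hasDerivAt_mul_exp_smul_mul_apply B A C τ i j

theorem integral_mul_exp_smul (B A : Matrix m m ℝ) (hA : IsUnit A) (s t : ℝ) :
    ∫ τ in s..t, B * exp (τ • A) = B * (exp (t • A) - exp (s • A)) * A⁻¹ := by
  have hA' : A * A⁻¹ = 1 := mul_nonsing_inv A ((isUnit_iff_isUnit_det A).1 hA)
  have hderiv (τ : ℝ) : HasDerivAt (fun u => B * exp (u • A) * A⁻¹) (B * exp (τ • A)) τ := by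
    simpa only [mul_assoc, hA', mul_one] using hasDerivAt_mul_exp_smul_mul B A A⁻¹ τ
  have hcont : Continuous fun τ : ℝ => B * exp (τ • A) := continuous_iff_continuousAt.2 fun τ => by
    have h := (hasDerivAt_mul_exp_smul_mul B A 1 τ).continuousAt
    simp only [mul_one] at h
    -- the norm topology and the product topology agree only up to unfolding
    exact h
  rw [intervalIntegral.integral_eq_sub_of_hasDerivAt (fun τ _ => hderiv τ)
    (hcont.intervalIntegrable s t), mul_sub, sub_mul]

theorem exp_smul_one_add (a : ℝ) (M : Matrix m m ℝ) :
    exp (a • (1 : Matrix m m ℝ) + M) = Real.exp a • exp M := by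
  rw [exp_add_of_commute _ _ ((Commute.one_left M).smul_left a), smul_one_eq_diagonal,
    exp_diagonal, Pi.exp_def, ← Real.exp_eq_exp_ℝ, ← smul_one_eq_diagonal, smul_one_mul]

theorem exp_add_smul (L : Matrix m m ℝ) (x y : ℝ) :
    exp ((x + y) • L) = exp (x • L) * exp (y • L) := by
  rw [add_smul, exp_add_of_commute _ _ (((Commute.refl L).smul_left x).smul_right y)]

theorem exp_smul_mul_transpose_of_isSymm {L : Matrix m m ℝ} (hL : L.IsSymm) (x : ℝ) :
    exp (x • L) * (exp (x • L))ᵀ = exp ((2 * x) • L) := by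
  rw [← exp_transpose, transpose_smul, hL.eq, ← exp_add_smul, two_mul]

end Matrix

theorem tsheat_ve_conditional_covariance_general {n : ℕ}
    (L : Matrix (Fin n) (Fin n) ℝ) (hLpsd : L.PosSemidef)
    (c : ℝ) (hc : 0 < c) (σmin σmax : ℝ) (hσ0 : 0 < σmin) (hσ : σmin < σmax) :
    let g : ℝ → ℝ := fun τ =>
      σmin * (σmax / σmin) ^ τ * Real.sqrt (2 * Real.log (σmax / σmin))
    let A : Matrix (Fin n) (Fin n) ℝ :=
      Real.log (σmax / σmin) • (1 : Matrix (Fin n) (Fin n) ℝ) + c • L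
    A.PosDef ∧
      ∀ s t : ℝ, s ≤ t →
        (∫ τ in s..t, g τ ^ 2 •
            (exp ((-(c * (t - τ))) • L) * (exp ((-(c * (t - τ))) • L))ᵀ)) =
          (σmin ^ 2 * Real.log (σmax / σmin)) •
            (exp ((-(2 * c * t)) • L) * (exp ((2 * t) • A) - exp ((2 * s) • A)) * A⁻¹) := by
  set ℓ := Real.log (σmax / σmin) with hℓ_def
  intro g A
  have hℓ : 0 < ℓ := Real.log_pos ((one_lt_div hσ0).2 hσ)
  have hA : A.PosDef := (PosDef.one.smul hℓ).add_posSemidef (hLpsd.smul hc.le)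
  refine ⟨hA, fun s t _ => ?_⟩
  have hg (τ : ℝ) : g τ ^ 2 = 2 * σmin ^ 2 * ℓ * Real.exp (τ * (2 * ℓ)) := by
    rw [mul_pow, mul_pow, Real.sq_sqrt (by linarith),
      Real.rpow_def_of_pos (div_pos (hσ0.trans hσ) hσ0), ← hℓ_def, ← Real.exp_nat_mul]
    ring_nf
  have hexpA (τ : ℝ) :
      exp (τ • ((2 : ℝ) • A)) = Real.exp (τ * (2 * ℓ)) • exp ((2 * c * τ) • L) := by
    rw [← exp_smul_one_add]
    congr 1
    simp only [A, smul_add, smul_smul]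
    ring_nf
  have hL : L.IsSymm := isHermitian_iff_isSymm.1 hLpsd.isHermitian
  have hintegrand (τ : ℝ) :
      g τ ^ 2 • (exp ((-(c * (t - τ))) • L) * (exp ((-(c * (t - τ))) • L))ᵀ) =
        (2 * σmin ^ 2 * ℓ) • (exp ((-(2 * c * t)) • L) * exp (τ • ((2 : ℝ) • A))) := by
    rw [exp_smul_mul_transpose_of_isSymm hL, hexpA, mul_smul_comm, smul_smul, hg,
      ← exp_add_smul]
    ring_nf
  have h2A : IsUnit ((2 : ℝ) • A) := hA.isUnit.smul (Units.mk0 (2 : ℝ) two_ne_zero)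
  have hinv : ((2 : ℝ) • A)⁻¹ = (2 : ℝ)⁻¹ • A⁻¹ :=
    inv_smul' A (Units.mk0 (2 : ℝ) two_ne_zero) ((isUnit_iff_isUnit_det A).1 hA.isUnit)
  simp_rw [hintegrand]
  rw [intervalIntegral.integral_smul, integral_mul_exp_smul _ _ h2A, hinv, mul_smul_comm,
    smul_smul, smul_smul, smul_smul, mul_comm t, mul_comm s]
  congr 1
  ring

/-- Conditional covariance `K_{t|s}` of the variance-exploding topological heat diffusion
`TSHeat_VE`, `dY = -cLY dt + g(t) dW` with `g(τ) = σ_min (σ_max/σ_min)^τ √(2 ln(σ_max/σ_min))`,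
`L` symmetric positive semidefinite, `c > 0`, `0 < σ_min < σ_max`, and
`A = ln(σ_max/σ_min) • I + c • L`: `A` is positive definite, and for `s ≤ t`,
`∫ s..t g(τ)² • (exp(-c(t-τ) • L) exp(-c(t-τ) • L)ᵀ) dτ
  = σ_min² ln(σ_max/σ_min) • (exp(-2ct • L) (exp(2t • A) - exp(2s • A)) A⁻¹)`. -/
theorem tsheat_ve_conditional_covariance {n : ℕ}
    (L : Matrix (Fin n) (Fin n) ℝ) (hL : L.IsSymm) (hLpsd : L.PosSemidef)
    (c : ℝ) (hc : 0 < c) (σmin σmax : ℝ) (hσ0 : 0 < σmin) (hσ : σmin < σmax) :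
    let g : ℝ → ℝ := fun τ =>
      σmin * (σmax / σmin) ^ τ * Real.sqrt (2 * Real.log (σmax / σmin))
    let A : Matrix (Fin n) (Fin n) ℝ :=
      Real.log (σmax / σmin) • (1 : Matrix (Fin n) (Fin n) ℝ) + c • L
    A.PosDef ∧
      ∀ s t : ℝ, s ≤ t →
        (∫ τ in s..t, g τ ^ 2 •
            (exp ((-(c * (t - τ))) • L) * (exp ((-(c * (t - τ))) • L))ᵀ)) =
          (σmin ^ 2 * Real.log (σmax / σmin)) •
            (exp ((-(2 * c * t)) • L) * (exp ((2 * t) • A) - exp ((2 * s) • A)) * A⁻¹) :=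
  tsheat_ve_conditional_covariance_general L hLpsd c hc σmin σmax hσ0 hσ
end

section
/- Fix n, K ≥ 1, a symmetric n×n real matrix L, continuous functions h_0, …, h_K : ℝ → ℝ with H_t := ∑_{k=0}^K h_k(t) • L^k, and a continuous function g : ℝ → ℝ. Write Ψ_t := exp(∫_0^t H_τ dτ) and define K(t) := Ψ_t * (∫_0^t g(τ)² • (Ψ_τ⁻¹ * Ψ_τ⁻¹) dτ) * Ψ_tᵀ. Then for every t, the matrix-valued function K has derivative H_t * K(t) + g(t)² • I + K(t) * H_tᵀ at t. -/
/-!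
Every `H τ` is a polynomial in `L`, hence so is `A t := ∫_0^t H = ∑ₖ (∫_0^t hₖ) • Lᵏ`. Inside the
closed commutative subalgebra generated by `L` the exponential differentiates as in the scalar
case, so `Ψ' = H Ψ`; moreover `Ψ = exp A` is invertible, and symmetric because `L` is. The
product rule together with the fundamental theorem of calculus for the inner integral gives
`K' = H K + Ψ (g² Ψ⁻¹ Ψ⁻¹) Ψᵀ + K Hᵀ`, and the middle term is `g² • 1` since `Ψᵀ = Ψ`.
-/

open MeasureTheory Matrix NormedSpace

attribute [local instance] Matrix.normedAddCommGroup Matrix.normedSpace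

section ExpDeriv

variable {𝕂 𝔸 : Type*} [RCLike 𝕂] [NormedRing 𝔸] [NormedAlgebra 𝕂 𝔸] [CompleteSpace 𝔸]

theorem hasDerivAt_exp_sum_smul_pow {ι : Type*} (s : Finset ι) (x : 𝔸) (p : ι → ℕ)
    {c : ι → 𝕂 → 𝕂} {c' : ι → 𝕂} {t : 𝕂} (hc : ∀ i ∈ s, HasDerivAt (c i) (c' i) t) :
    HasDerivAt (fun u => exp (∑ i ∈ s, c i u • x ^ p i))
      ((∑ i ∈ s, c' i • x ^ p i) * exp (∑ i ∈ s, c i t • x ^ p i)) t := by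
  let S := Algebra.elemental 𝕂 x
  let : NormedCommRing S := { (inferInstance : NormedRing S) with mul_comm := mul_comm }
  have : CompleteSpace S := (Algebra.elemental.isClosed 𝕂 x).completeSpace_coe
  let y : S := ⟨x, Algebra.elemental.self_mem 𝕂 x⟩
  have coe_sum (d : ι → 𝕂) : ((∑ i ∈ s, d i • y ^ p i : S) : 𝔸) = ∑ i ∈ s, d i • x ^ p i := by
    simp [y]
  have coe_exp (z : S) : ((exp z : S) : 𝔸) = exp (z : 𝔸) := by
    let : NormedAlgebra ℚ S := NormedAlgebra.restrictScalars ℚ 𝕂 S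
    let : NormedAlgebra ℚ 𝔸 := NormedAlgebra.restrictScalars ℚ 𝕂 𝔸
    exact map_exp S.val continuous_subtype_val z
  have hF : HasDerivAt (fun u => ∑ i ∈ s, c i u • y ^ p i) (∑ i ∈ s, c' i • y ^ p i) t :=
    HasDerivAt.fun_sum fun i hi => (hc i hi).smul_const _
  have hexp := (hasFDerivAt_exp (𝕂 := 𝕂) (x := ∑ i ∈ s, c i t • y ^ p i)).comp_hasDerivAt t hF
  have hval : HasDerivAt (fun u => ((exp (∑ i ∈ s, c i u • y ^ p i) : S) : 𝔸))
      ((∑ i ∈ s, c' i • y ^ p i) * exp (∑ i ∈ s, c i t • y ^ p i) : S) t := by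
    rw [mul_comm]
    exact S.toSubmodule.subtypeL.hasFDerivAt.comp_hasDerivAt t hexp
  simpa only [coe_exp, coe_sum, Subalgebra.coe_mul] using hval

end ExpDeriv

theorem intervalIntegral.integral_finset_sum_smul_const {ι E : Type*} [NormedAddCommGroup E]
    [NormedSpace ℝ E] [CompleteSpace E] {μ : Measure ℝ} {a b : ℝ} (s : Finset ι)
    {f : ι → ℝ → ℝ} (hf : ∀ i ∈ s, IntervalIntegrable (f i) μ a b) (v : ι → E) :
    ∫ τ in a..b, ∑ i ∈ s, f i τ • v i ∂μ = ∑ i ∈ s, (∫ τ in a..b, f i τ ∂μ) • v i := by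
  rw [intervalIntegral.integral_finsetSum fun i hi =>
    ⟨(hf i hi).1.smul_const (v i), (hf i hi).2.smul_const (v i)⟩]
  exact Finset.sum_congr rfl fun i _ => intervalIntegral.integral_smul_const _ _

theorem Continuous.matrix_inv {X m 𝕂 : Type*} [TopologicalSpace X] [Fintype m] [DecidableEq m]
    [NormedField 𝕂] {A : X → Matrix m m 𝕂} (hA : Continuous A) (hdet : ∀ x, IsUnit (A x).det) :
    Continuous fun x => (A x)⁻¹ :=
  continuous_iff_continuousAt.2 fun x =>
    (continuousAt_matrix_inv _ (NormedRing.inverse_continuousAt (hdet x).unit)).comp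
      hA.continuousAt

section MatrixDeriv

variable {𝕂 m : Type*} [RCLike 𝕂] [Fintype m]

theorem HasDerivAt.matrix_transpose {n : Type*} [Fintype n] {A : 𝕂 → Matrix m n 𝕂}
    {A' : Matrix m n 𝕂} {t : 𝕂} (hA : HasDerivAt A A' t) :
    HasDerivAt (fun u => (A u)ᵀ) A'ᵀ t :=
  (Matrix.transposeLinearEquiv m n 𝕂 𝕂).toContinuousLinearEquiv.hasFDerivAt.comp_hasDerivAt t hA

variable [DecidableEq m]

/- `HasDerivAt` only depends on the topology, which the operator norm `linftyOp` shares with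
the entrywise norm; so results for normed algebras apply to matrices definitionally. -/

theorem Matrix.hasDerivAt_exp_sum_smul_pow {ι : Type*} (s : Finset ι) (x : Matrix m m 𝕂)
    (p : ι → ℕ) {c : ι → 𝕂 → 𝕂} {c' : ι → 𝕂} {t : 𝕂} (hc : ∀ i ∈ s, HasDerivAt (c i) (c' i) t) :
    HasDerivAt (fun u => exp (∑ i ∈ s, c i u • x ^ p i))
      ((∑ i ∈ s, c' i • x ^ p i) * exp (∑ i ∈ s, c i t • x ^ p i)) t := by
  let := Matrix.linftyOpNormedRing (n := m) (α := 𝕂)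
  let := Matrix.linftyOpNormedAlgebra (R := 𝕂) (n := m) (α := 𝕂)
  refine @_root_.hasDerivAt_exp_sum_smul_pow 𝕂 _ _ _ _ ?_ _ s x p _ _ _ hc
  exact FiniteDimensional.complete 𝕂 _

theorem HasDerivAt.matrix_mul {A B : 𝕂 → Matrix m m 𝕂} {A' B' : Matrix m m 𝕂} {t : 𝕂}
    (hA : HasDerivAt A A' t) (hB : HasDerivAt B B' t) :
    HasDerivAt (fun u => A u * B u) (A' * B t + A t * B') t := by
  let := Matrix.linftyOpNormedRing (n := m) (α := 𝕂)
  let := Matrix.linftyOpNormedAlgebra (R := 𝕂) (n := m) (α := 𝕂)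
  exact hA.mul hB

theorem HasDerivAt.mul_mul_transpose_lyapunov {Ψ S : 𝕂 → Matrix m m 𝕂} {H : Matrix m m 𝕂}
    {q t : 𝕂} (hΨ : HasDerivAt Ψ (H * Ψ t) t) (hS : HasDerivAt S (q • ((Ψ t)⁻¹ * (Ψ t)ᵀ⁻¹)) t)
    (hdet : IsUnit (Ψ t).det) :
    HasDerivAt (fun u => Ψ u * S u * (Ψ u)ᵀ)
      (H * (Ψ t * S t * (Ψ t)ᵀ) + q • 1 + Ψ t * S t * (Ψ t)ᵀ * Hᵀ) t := by
  have hdet_transpose : IsUnit (Ψ t)ᵀ.det := by rwa [det_transpose]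
  have hcancel : Ψ t * ((Ψ t)⁻¹ * (Ψ t)ᵀ⁻¹) * (Ψ t)ᵀ = 1 := by
    rw [mul_assoc, mul_assoc, nonsing_inv_mul _ hdet_transpose, mul_one, mul_nonsing_inv _ hdet]
  refine ((hΨ.matrix_mul hS).matrix_mul hΨ.matrix_transpose).congr_deriv ?_
  rw [transpose_mul, add_mul, mul_smul_comm, smul_mul_assoc, hcancel]
  simp only [mul_assoc]

end MatrixDeriv

theorem conditional_covariance_hasDerivAt_general {n K : ℕ}
    (L : Matrix (Fin n) (Fin n) ℝ) (hL : L.IsSymm)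
    (h : Fin (K + 1) → ℝ → ℝ) (hh : ∀ k, Continuous (h k))
    (g : ℝ → ℝ) (hg : Continuous g) :
    let H : ℝ → Matrix (Fin n) (Fin n) ℝ := fun t => ∑ k : Fin (K + 1), h k t • L ^ (k : ℕ)
    let Ψ : ℝ → Matrix (Fin n) (Fin n) ℝ := fun t => exp (∫ τ in (0:ℝ)..t, H τ)
    let Kc : ℝ → Matrix (Fin n) (Fin n) ℝ := fun t =>
      Ψ t * (∫ τ in (0:ℝ)..t, g τ ^ 2 • ((Ψ τ)⁻¹ * (Ψ τ)⁻¹)) * (Ψ t)ᵀ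
    ∀ t : ℝ, HasDerivAt Kc
      (H t * Kc t + g t ^ 2 • (1 : Matrix (Fin n) (Fin n) ℝ) + Kc t * (H t)ᵀ) t := by
  intro H Ψ Kc t
  let A : ℝ → Matrix (Fin n) (Fin n) ℝ := fun s => ∑ k, (∫ τ in (0:ℝ)..s, h k τ) • L ^ (k : ℕ)
  have hΨA : Ψ = fun s => exp (A s) := funext fun s => congrArg exp <|
    intervalIntegral.integral_finset_sum_smul_const _ (fun k _ => (hh k).intervalIntegrable 0 s) _
  have hΨ (s : ℝ) : HasDerivAt Ψ (H s * Ψ s) s := by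
    rw [hΨA]
    exact Matrix.hasDerivAt_exp_sum_smul_pow _ L _ fun k _ =>
      ((hh k).integral_hasStrictDerivAt 0 s).hasDerivAt
  have hsymm (s : ℝ) : (Ψ s)ᵀ = Ψ s := by
    have hA : (A s).IsSymm := by
      simp only [A, IsSymm, transpose_sum, transpose_smul, transpose_pow, hL.eq]
    rw [hΨA]
    exact hA.exp
  have hdet (s : ℝ) : IsUnit (Ψ s).det := by
    rw [← isUnit_iff_isUnit_det, hΨA]
    exact isUnit_exp _
  have hintegrand : Continuous fun τ => g τ ^ 2 • ((Ψ τ)⁻¹ * (Ψ τ)⁻¹) := by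
    have hinv := (continuous_iff_continuousAt.2 fun s => (hΨ s).continuousAt).matrix_inv hdet
    exact (hg.pow 2).smul (hinv.mul hinv)
  have hS : HasDerivAt (fun s => ∫ τ in (0:ℝ)..s, g τ ^ 2 • ((Ψ τ)⁻¹ * (Ψ τ)⁻¹))
      (g t ^ 2 • ((Ψ t)⁻¹ * (Ψ t)ᵀ⁻¹)) t := by
    rw [hsymm t]
    exact (hintegrand.integral_hasStrictDerivAt 0 t).hasDerivAt
  exact (hΨ t).mul_mul_transpose_lyapunov hS (hdet t)

/-- Derivative of the conditional covariance `K(t) = Ψ_t (∫_0^t g(τ)² • Ψ_τ⁻¹ Ψ_τ⁻¹ dτ) Ψ_tᵀ`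
of the topological SDE `dY = H_t Y dt + g_t dW` with `H t = ∑_{k=0}^K h_k(t) • L^k` and
`Ψ_t = exp (∫_0^t H)`: for every `t`, `K` has derivative
`H_t K(t) + g(t)² • I + K(t) H_tᵀ` at `t`. -/
theorem conditional_covariance_hasDerivAt {n K : ℕ} (hn : 1 ≤ n) (hK : 1 ≤ K)
    (L : Matrix (Fin n) (Fin n) ℝ) (hL : L.IsSymm)
    (h : Fin (K + 1) → ℝ → ℝ) (hh : ∀ k, Continuous (h k))
    (g : ℝ → ℝ) (hg : Continuous g) :
    let H : ℝ → Matrix (Fin n) (Fin n) ℝ := fun t => ∑ k : Fin (K + 1), h k t • L ^ (k : ℕ)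
    let Ψ : ℝ → Matrix (Fin n) (Fin n) ℝ := fun t => exp (∫ τ in (0:ℝ)..t, H τ)
    let Kc : ℝ → Matrix (Fin n) (Fin n) ℝ := fun t =>
      Ψ t * (∫ τ in (0:ℝ)..t, g τ ^ 2 • ((Ψ τ)⁻¹ * (Ψ τ)⁻¹)) * (Ψ t)ᵀ
    ∀ t : ℝ, HasDerivAt Kc
      (H t * Kc t + g t ^ 2 • (1 : Matrix (Fin n) (Fin n) ℝ) + Kc t * (H t)ᵀ) t :=
  conditional_covariance_hasDerivAt_general L hL h hh g hg
end

section
/- Let L be a symmetric positive semidefinite n×n real matrix. Then for every y ∈ ℝ^n, the vector exp(−t • L) · y converges, as t → ∞, to the orthogonal projection of y onto the kernel of L (the kernel of the linear map x ↦ L·x on Euclidean space ℝ^n with its standard inner product). -/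
/-!
Diagonalise `L` in an orthonormal eigenbasis `bᵢ` with eigenvalues `μᵢ ≥ 0`. Then
`exp (-t • L) y = ∑ᵢ e^{-t μᵢ} ⟪bᵢ, y⟫ bᵢ`, and `e^{-t μᵢ}` tends to `1` when `μᵢ = 0` and to `0`
otherwise. The limit `∑_{μᵢ = 0} ⟪bᵢ, y⟫ bᵢ` is the orthogonal projection onto `ker L`: it lies in
the kernel, and a kernel vector has no component along an eigenvector with nonzero eigenvalue.
-/

open Matrix NormedSpace Filter

open scoped InnerProductSpace

theorem Real.tendsto_exp_neg_mul_atTop_of_nonneg {μ : ℝ} (hμ : 0 ≤ μ) :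
    Tendsto (fun t : ℝ => Real.exp (-t * μ)) atTop (nhds (if μ = 0 then 1 else 0)) := by
  rcases hμ.eq_or_lt with rfl | hpos
  · simp
  · simp only [hpos.ne', if_false, neg_mul]
    exact Real.tendsto_exp_neg_atTop_nhds_zero.comp (tendsto_id.atTop_mul_const hpos)

open scoped Norms.Operator in
theorem Matrix.exp_mulVec_of_mulVec_eq_smul {𝕂 m : Type*} [RCLike 𝕂] [Fintype m] [DecidableEq m]
    {A : Matrix m m 𝕂} {v : m → 𝕂} {μ : 𝕂} (h : A *ᵥ v = μ • v) : exp A *ᵥ v = exp μ • v := by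
  have hpow : ∀ k : ℕ, A ^ k *ᵥ v = μ ^ k • v := by
    intro k
    induction k with
    | zero => simp
    | succ k ih => rw [pow_succ', ← mulVec_mulVec, ih, mulVec_smul, h, smul_smul, pow_succ]
  have hsumA : HasSum (fun k : ℕ => ((k.factorial⁻¹ : 𝕂) • A ^ k) *ᵥ v) (exp A *ᵥ v) :=
    (exp_series_hasSum_exp' (𝕂 := 𝕂) A).map (mulVec.addMonoidHomLeft v)
      (continuous_id.matrix_mulVec continuous_const)
  have hsumμ : HasSum (fun k : ℕ => ((k.factorial⁻¹ : 𝕂) • A ^ k) *ᵥ v) (exp μ • v) := by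
    simpa only [smul_mulVec, hpow, smul_smul, smul_eq_mul] using
      (exp_series_hasSum_exp' (𝕂 := 𝕂) μ).smul_const v
  exact hsumA.unique hsumμ

namespace OrthonormalBasis

variable {𝕜 E ι : Type*} [RCLike 𝕜] [NormedAddCommGroup E] [InnerProductSpace 𝕜 E] [Fintype ι]
  (b : OrthonormalBasis ι 𝕜 E) {T : E →ₗ[𝕜] E} {μ : ι → 𝕜}

theorem apply_eq_sum_of_apply_eq_smul (hT : ∀ i, T (b i) = μ i • b i) (y : E) :
    T y = ∑ i, (μ i * ⟪b i, y⟫_𝕜) • b i := by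
  conv_lhs => rw [← b.sum_repr' y]
  simp only [map_sum, map_smul, hT, smul_smul, mul_comm]

theorem inner_apply_of_apply_eq_smul (hT : ∀ i, T (b i) = μ i • b i) (y : E) (i : ι) :
    ⟪b i, T y⟫_𝕜 = μ i * ⟪b i, y⟫_𝕜 := by
  rw [b.apply_eq_sum_of_apply_eq_smul hT, b.orthonormal.inner_right_fintype]

theorem starProjection_ker_eq_sum [FiniteDimensional 𝕜 E] (hT : ∀ i, T (b i) = μ i • b i) (y : E) :
    (LinearMap.ker T).starProjection y = ∑ i with μ i = 0, ⟪b i, y⟫_𝕜 • b i := by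
  apply Submodule.eq_starProjection_of_mem_of_inner_eq_zero
  · rw [LinearMap.mem_ker, map_sum]
    refine Finset.sum_eq_zero fun i hi => ?_
    rw [map_smul, hT, (Finset.mem_filter.mp hi).2, zero_smul, smul_zero]
  · intro w hw
    rw [← b.sum_inner_mul_inner]
    refine Finset.sum_eq_zero fun i _ => ?_
    by_cases hμ : μ i = 0
    · suffices ⟪b i, y - ∑ i with μ i = 0, ⟪b i, y⟫_𝕜 • b i⟫_𝕜 = 0 by
        rw [← inner_conj_symm, this, map_zero, zero_mul]
      rw [inner_sub_right, b.orthonormal.inner_right_sum _ (by simpa using hμ), sub_self]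
    · have hwi : μ i * ⟪b i, w⟫_𝕜 = 0 := by
        rw [← b.inner_apply_of_apply_eq_smul hT, LinearMap.mem_ker.mp hw, inner_zero_right]
      rw [(mul_eq_zero.mp hwi).resolve_left hμ, mul_zero]

end OrthonormalBasis

theorem matrix_exp_neg_smul_tendsto_orthogonalProjection_ker_general {n : ℕ}
    (L : Matrix (Fin n) (Fin n) ℝ) (hLpsd : L.PosSemidef)
    (y : EuclideanSpace ℝ (Fin n)) :
    Tendsto (fun t : ℝ => Matrix.toEuclideanLin (NormedSpace.exp ((-t) • L)) y) atTop
      (nhds ((Submodule.orthogonalProjectionOnto (LinearMap.ker (Matrix.toEuclideanLin L)) y :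
        EuclideanSpace ℝ (Fin n)))) := by
  set b := hLpsd.isHermitian.eigenvectorBasis
  set μ := hLpsd.isHermitian.eigenvalues
  have hLb (i) : toEuclideanLin L (b i) = μ i • b i :=
    WithLp.ofLp_injective 2 (hLpsd.isHermitian.mulVec_eigenvectorBasis i)
  have hexpb (t : ℝ) (i) : toEuclideanLin (exp ((-t) • L)) (b i) = Real.exp (-t * μ i) • b i := by
    have hv : ((-t) • L) *ᵥ b i = (-t * μ i) • b i := by
      rw [smul_mulVec, hLpsd.isHermitian.mulVec_eigenvectorBasis i, smul_smul]
    rw [Real.exp_eq_exp_ℝ]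
    exact WithLp.ofLp_injective 2 (exp_mulVec_of_mulVec_eq_smul hv)
  simp_rw [Submodule.coe_orthogonalProjectionOnto_apply, b.starProjection_ker_eq_sum hLb,
    Finset.sum_filter, b.apply_eq_sum_of_apply_eq_smul (hexpb _)]
  refine tendsto_finsetSum _ fun i _ => ?_
  have := ((Real.tendsto_exp_neg_mul_atTop_of_nonneg (hLpsd.eigenvalues_nonneg i)).mul_const
    ⟪b i, y⟫_ℝ).smul_const (b i)
  split_ifs at this ⊢ <;> simpa using this

/-- Harmonic steady state of the topological heat diffusion: for a symmetric positive
semidefinite real matrix `L`, `exp (-t • L) · y` converges as `t → ∞` to the orthogonal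
projection of `y` onto the kernel of the linear map `x ↦ L · x` on Euclidean space. -/
theorem matrix_exp_neg_smul_tendsto_orthogonalProjection_ker {n : ℕ}
    (L : Matrix (Fin n) (Fin n) ℝ) (hL : L.IsSymm) (hLpsd : L.PosSemidef)
    (y : EuclideanSpace ℝ (Fin n)) :
    Tendsto (fun t : ℝ => Matrix.toEuclideanLin (NormedSpace.exp ((-t) • L)) y) atTop
      (nhds ((Submodule.orthogonalProjectionOnto (LinearMap.ker (Matrix.toEuclideanLin L)) y :
        EuclideanSpace ℝ (Fin n)))) :=
  matrix_exp_neg_smul_tendsto_orthogonalProjection_ker_general L hLpsd y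
end
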